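/- arXiv:2505.20535 — 2 statements merged into one kernel-verified Lean document; each statement's English description precedes it below -/
import Mathlib

section
/- Fix a relative distance r ∈ ℝ and a nonzero ψ ∈ ℝ^d (d even) with all 2D subspaces ψ^(i) nonzero. Define the key k = 𝐑^r ψ (the [CLS]-like key at position 0) and for position j the rotated query 𝐑^j ψ. Then the dot product (𝐑^j ψ)ᵀ k = Σ_i ‖ψ^(i)‖² cos((r−j)θ_i) is maximized over j at j = r; moreover if the θ_i are such that s·θ_i ∈ 2πℤ for all i implies s = 0, the maximizer j = r is unique. -/
open Real Matrix

/-- The 2D rotation matrix by angle `α`. -/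
noncomputable def rot (α : ℝ) : Matrix (Fin 2) (Fin 2) ℝ :=
  !![Real.cos α, -Real.sin α; Real.sin α, Real.cos α]

/-- The block-diagonal RoPE matrix `𝐑^s` on `ℝ^d` (`d = 2n`), whose `i`-th `2×2` block
is the rotation by angle `s * θ i`. -/
noncomputable def ropeMat {n : ℕ} (θ : Fin n → ℝ) (s : ℝ) :
    Matrix (Fin n × Fin 2) (Fin n × Fin 2) ℝ :=
  fun p q => if p.1 = q.1 then rot (s * θ p.1) p.2 q.2 else 0

/-! Rotating one vector by `α` and by `β` leaves only the relative angle `β - α`. Summing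
over the planes, the query–key score is a positively weighted sum of `cos ((r - j) θ_i)`,
hence at most the sum of the weights, with equality exactly when every `(r - j) θ_i` is a
multiple of `2π`. -/

theorem dotProduct_rot_mulVec_rot_mulVec (α β : ℝ) (x : Fin 2 → ℝ) :
    (rot α *ᵥ x) ⬝ᵥ (rot β *ᵥ x) = (x 0 ^ 2 + x 1 ^ 2) * cos (β - α) := by
  simp only [rot, mulVec, dotProduct, Fin.sum_univ_two, cons_val', cons_val_zero,
    cons_val_one, empty_val', cons_val_fin_one, of_apply, cos_sub]
  ring

theorem ropeMat_mulVec_apply {n : ℕ} (θ : Fin n → ℝ) (s : ℝ) (ψ : Fin n × Fin 2 → ℝ)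
    (i : Fin n) (a : Fin 2) :
    (ropeMat θ s *ᵥ ψ) (i, a) = (rot (s * θ i) *ᵥ fun b => ψ (i, b)) a := by
  simp only [mulVec, dotProduct, ropeMat, Fintype.sum_prod_type]
  rw [Finset.sum_eq_single i (fun k _ hk => by simp [Ne.symm hk]) (by simp)]
  simp

theorem dotProduct_ropeMat_mulVec {n : ℕ} (θ : Fin n → ℝ) (r j : ℝ) (ψ : Fin n × Fin 2 → ℝ) :
    (ropeMat θ j *ᵥ ψ) ⬝ᵥ (ropeMat θ r *ᵥ ψ) =
      ∑ i : Fin n, (ψ (i, 0) ^ 2 + ψ (i, 1) ^ 2) * cos ((r - j) * θ i) := by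
  rw [dotProduct, Fintype.sum_prod_type]
  refine Finset.sum_congr rfl fun i _ => ?_
  simp only [ropeMat_mulVec_apply]
  rw [sub_mul]
  exact dotProduct_rot_mulVec_rot_mulVec _ _ _

theorem dotProduct_ropeMat_mulVec_self {n : ℕ} (θ : Fin n → ℝ) (r : ℝ) (ψ : Fin n × Fin 2 → ℝ) :
    (ropeMat θ r *ᵥ ψ) ⬝ᵥ (ropeMat θ r *ᵥ ψ) = ∑ i : Fin n, (ψ (i, 0) ^ 2 + ψ (i, 1) ^ 2) := by
  simp [dotProduct_ropeMat_mulVec]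

theorem Finset.sum_mul_cos_le_sum {ι : Type*} (s : Finset ι) {w : ι → ℝ}
    (hw : ∀ i ∈ s, 0 ≤ w i) (x : ι → ℝ) :
    ∑ i ∈ s, w i * cos (x i) ≤ ∑ i ∈ s, w i :=
  Finset.sum_le_sum fun i hi => mul_le_of_le_one_right (hw i hi) (cos_le_one _)

theorem Finset.cos_eq_one_of_sum_mul_cos_eq_sum {ι : Type*} {s : Finset ι} {w x : ι → ℝ}
    (hw : ∀ i ∈ s, 0 < w i) (h : ∑ i ∈ s, w i * cos (x i) = ∑ i ∈ s, w i) :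
    ∀ i ∈ s, cos (x i) = 1 := by
  have hterm := (Finset.sum_eq_sum_iff_of_le
    fun i hi => mul_le_of_le_one_right (hw i hi).le (cos_le_one (x i))).mp h
  intro i hi
  simpa [(hw i hi).ne'] using hterm i hi

theorem rope_cls_position_recovery_general {n : ℕ} (θ : Fin n → ℝ)
    (r : ℝ) (ψ : Fin n × Fin 2 → ℝ)
    (hblocks : ∀ i : Fin n, ψ (i, 0) ≠ 0 ∨ ψ (i, 1) ≠ 0) :
    (∀ j : ℝ,
        dotProduct ((ropeMat θ j).mulVec ψ) ((ropeMat θ r).mulVec ψ) =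
          ∑ i : Fin n, (ψ (i, 0) ^ 2 + ψ (i, 1) ^ 2) * Real.cos ((r - j) * θ i)) ∧
    (∀ j : ℝ,
        dotProduct ((ropeMat θ j).mulVec ψ) ((ropeMat θ r).mulVec ψ) ≤
          dotProduct ((ropeMat θ r).mulVec ψ) ((ropeMat θ r).mulVec ψ)) ∧
    ((∀ s : ℝ, (∀ i : Fin n, ∃ z : ℤ, s * θ i = 2 * Real.pi * z) → s = 0) →
      ∀ j : ℝ,
        dotProduct ((ropeMat θ j).mulVec ψ) ((ropeMat θ r).mulVec ψ) =
          dotProduct ((ropeMat θ r).mulVec ψ) ((ropeMat θ r).mulVec ψ) →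
        j = r) := by
  have hweight (i : Fin n) : 0 < ψ (i, 0) ^ 2 + ψ (i, 1) ^ 2 := by
    rcases hblocks i with h | h <;> positivity
  refine ⟨(dotProduct_ropeMat_mulVec θ r · ψ), fun j => ?_, fun hperiod j hj => ?_⟩
  · rw [dotProduct_ropeMat_mulVec, dotProduct_ropeMat_mulVec_self]
    exact Finset.sum_mul_cos_le_sum _ (fun i _ => (hweight i).le) _
  · rw [dotProduct_ropeMat_mulVec, dotProduct_ropeMat_mulVec_self] at hj
    have hcos := Finset.cos_eq_one_of_sum_mul_cos_eq_sum (fun i _ => hweight i) hj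
    suffices r - j = 0 by linarith
    refine hperiod _ fun i => ?_
    obtain ⟨z, hz⟩ := (cos_eq_one_iff _).mp (hcos i (Finset.mem_univ i))
    exact ⟨z, by rw [← hz]; ring⟩

/-- With the key `k = 𝐑^r ψ` ([CLS]-like key at position 0) and the query `𝐑^j ψ` at
position `j`, the dot product equals `Σ_i ‖ψ^(i)‖² cos((r−j)θ_i)`, is maximized at
`j = r`, and the maximizer is unique when the only common period of the `θ_i` is `0`. -/
theorem rope_cls_position_recovery {n : ℕ} (θ : Fin n → ℝ) (hθ : ∀ i, 0 < θ i)
    (r : ℝ) (ψ : Fin n × Fin 2 → ℝ) (hψ : ψ ≠ 0)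
    (hblocks : ∀ i : Fin n, ψ (i, 0) ≠ 0 ∨ ψ (i, 1) ≠ 0) :
    (∀ j : ℝ,
        dotProduct ((ropeMat θ j).mulVec ψ) ((ropeMat θ r).mulVec ψ) =
          ∑ i : Fin n, (ψ (i, 0) ^ 2 + ψ (i, 1) ^ 2) * Real.cos ((r - j) * θ i)) ∧
    (∀ j : ℝ,
        dotProduct ((ropeMat θ j).mulVec ψ) ((ropeMat θ r).mulVec ψ) ≤
          dotProduct ((ropeMat θ r).mulVec ψ) ((ropeMat θ r).mulVec ψ)) ∧
    ((∀ s : ℝ, (∀ i : Fin n, ∃ z : ℤ, s * θ i = 2 * Real.pi * z) → s = 0) →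
      ∀ j : ℝ,
        dotProduct ((ropeMat θ j).mulVec ψ) ((ropeMat θ r).mulVec ψ) =
          dotProduct ((ropeMat θ r).mulVec ψ) ((ropeMat θ r).mulVec ψ) →
        j = r) :=
  rope_cls_position_recovery_general θ r ψ hblocks
end

section
/- For any nonzero q ∈ ℝ^d (d even) and any real distance r, the key k = 𝐑^r q maximizes the RoPE attention score ⟨𝐑^m q, 𝐑^n k'⟩ over all keys k' with ‖k'‖ = ‖q‖ precisely when m − n = r, achieving the value ‖q‖²; by Cauchy–Schwarz no key of equal norm can exceed this value at that relative distance. -/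
open Real Matrix

/-! Every `𝐑^s` is orthogonal and `s ↦ 𝐑^s` is a homomorphism from `(ℝ, +)`, so
`⟨𝐑^m q, 𝐑^{m'} (𝐑^r q)⟩ = ⟨𝐑^m q, 𝐑^m q⟩ = ‖q‖²` when `m = m' + r`, while for any key `k'`
with `‖k'‖ = ‖q‖` the vectors `𝐑^m q` and `𝐑^{m'} k'` both have norm `‖q‖`, so Cauchy–Schwarz
bounds their inner product by `‖q‖²`. -/

lemma rot_add (α β : ℝ) : rot (α + β) = rot α * rot β := by
  ext i j
  fin_cases i <;> fin_cases j <;>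
    simp [rot, Matrix.mul_apply, Real.cos_add, Real.sin_add] <;> ring

lemma rot_zero : rot 0 = 1 := by
  ext i j
  fin_cases i <;> fin_cases j <;> simp [rot]

lemma rot_transpose (α : ℝ) : (rot α)ᵀ = rot (-α) := by
  ext i j
  fin_cases i <;> fin_cases j <;> simp [rot]

section ropeMat

variable {n : ℕ} (θ : Fin n → ℝ)

/-- `ropeMat` indexes the blocks by the first coordinate, `blockDiagonal` by the second. -/
lemma ropeMat_eq_submatrix_blockDiagonal (s : ℝ) :
    ropeMat θ s = (blockDiagonal fun i => rot (s * θ i)).submatrix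
      (Equiv.prodComm _ _) (Equiv.prodComm _ _) := by
  ext ⟨i, j⟩ ⟨i', j'⟩
  simp [ropeMat, blockDiagonal_apply]

lemma ropeMat_add (a b : ℝ) : ropeMat θ (a + b) = ropeMat θ a * ropeMat θ b := by
  simp only [ropeMat_eq_submatrix_blockDiagonal, submatrix_mul_equiv, blockDiagonal_mul,
    add_mul, rot_add]

lemma ropeMat_zero : ropeMat θ 0 = 1 := by
  rw [ropeMat_eq_submatrix_blockDiagonal]
  simp only [zero_mul, rot_zero, ← Pi.one_def, blockDiagonal_one]
  exact submatrix_one_equiv _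

lemma ropeMat_transpose (s : ℝ) : (ropeMat θ s)ᵀ = ropeMat θ (-s) := by
  simp only [ropeMat_eq_submatrix_blockDiagonal, transpose_submatrix, blockDiagonal_transpose,
    rot_transpose, neg_mul]

lemma ropeMat_transpose_mul_self (s : ℝ) : (ropeMat θ s)ᵀ * ropeMat θ s = 1 := by
  rw [ropeMat_transpose, ← ropeMat_add, neg_add_cancel, ropeMat_zero]

end ropeMat

lemma dotProduct_mulVec_mulVec_of_transpose_mul_self {ι R : Type*} [Fintype ι] [DecidableEq ι]
    [CommSemiring R] {A : Matrix ι ι R} (hA : Aᵀ * A = 1) (u v : ι → R) :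
    (A *ᵥ u) ⬝ᵥ (A *ᵥ v) = u ⬝ᵥ v := by
  rw [← dotProduct_transpose_mulVec, mulVec_mulVec, hA, one_mulVec, dotProduct_comm]

lemma sum_sq_ropeMat_mulVec {n : ℕ} (θ : Fin n → ℝ) (s : ℝ) (v : Fin n × Fin 2 → ℝ) :
    ∑ p, (ropeMat θ s *ᵥ v) p ^ 2 = ∑ p, v p ^ 2 := by
  simpa only [dotProduct, sq] using
    dotProduct_mulVec_mulVec_of_transpose_mul_self (ropeMat_transpose_mul_self θ s) v v

lemma Finset.sum_mul_le_of_sum_sq_eq {ι : Type*} (s : Finset ι) {f g : ι → ℝ} {c : ℝ}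
    (hf : ∑ i ∈ s, f i ^ 2 = c) (hg : ∑ i ∈ s, g i ^ 2 = c) : ∑ i ∈ s, f i * g i ≤ c := by
  have hc : 0 ≤ c := hf ▸ Finset.sum_nonneg fun i _ => sq_nonneg (f i)
  calc ∑ i ∈ s, f i * g i ≤ √(∑ i ∈ s, f i ^ 2) * √(∑ i ∈ s, g i ^ 2) :=
        Real.sum_mul_le_sqrt_mul_sqrt s f g
    _ = c := by rw [hf, hg, Real.mul_self_sqrt hc]

theorem rope_key_construction_no_decay_general {n : ℕ} (θ : Fin n → ℝ)
    (q : Fin n × Fin 2 → ℝ) (r : ℝ) :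
    (∀ m m' : ℝ, m - m' = r →
      dotProduct ((ropeMat θ m).mulVec q)
          ((ropeMat θ m').mulVec ((ropeMat θ r).mulVec q)) =
        ∑ p : Fin n × Fin 2, q p ^ 2) ∧
    (∀ k' : Fin n × Fin 2 → ℝ,
      (∑ p : Fin n × Fin 2, k' p ^ 2) = ∑ p : Fin n × Fin 2, q p ^ 2 →
      ∀ m m' : ℝ, m - m' = r →
        dotProduct ((ropeMat θ m).mulVec q) ((ropeMat θ m').mulVec k') ≤
          ∑ p : Fin n × Fin 2, q p ^ 2) := by
  refine ⟨fun m m' hm => ?_, fun k' hk m m' _ => ?_⟩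
  · rw [mulVec_mulVec, ← ropeMat_add, show m' + r = m by linarith,
      dotProduct_mulVec_mulVec_of_transpose_mul_self (ropeMat_transpose_mul_self θ m)]
    simp only [dotProduct, sq]
  · exact Finset.sum_mul_le_of_sum_sq_eq _ (sum_sq_ropeMat_mulVec θ m q)
      ((sum_sq_ropeMat_mulVec θ m' k').trans hk)

/-- For any nonzero query `q` and any real distance `r`, the key `k = 𝐑^r q` achieves
the score `‖q‖²` whenever `m − n = r`, and by Cauchy–Schwarz no key of the same norm can
exceed this value at that relative distance. -/
theorem rope_key_construction_no_decay {n : ℕ} (θ : Fin n → ℝ)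
    (q : Fin n × Fin 2 → ℝ) (hq : q ≠ 0) (r : ℝ) :
    (∀ m m' : ℝ, m - m' = r →
      dotProduct ((ropeMat θ m).mulVec q)
          ((ropeMat θ m').mulVec ((ropeMat θ r).mulVec q)) =
        ∑ p : Fin n × Fin 2, q p ^ 2) ∧
    (∀ k' : Fin n × Fin 2 → ℝ,
      (∑ p : Fin n × Fin 2, k' p ^ 2) = ∑ p : Fin n × Fin 2, q p ^ 2 →
      ∀ m m' : ℝ, m - m' = r →
        dotProduct ((ropeMat θ m).mulVec q) ((ropeMat θ m').mulVec k') ≤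
          ∑ p : Fin n × Fin 2, q p ^ 2) :=
  rope_key_construction_no_decay_general θ q r
end
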